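/- Fix integers N_x, N_t ≥ 1 and K ≥ 2, set N = (N_x+1)(N_t+1). Let P_x = diag(p̂_0,…,p̂_{N_x}) and P_t be diagonal real matrices with strictly positive diagonal entries, let Q_x ∈ ℝ^{(N_x+1)×(N_x+1)} satisfy Q_x + Q_xᵀ = e_e e_eᵀ − e_w e_wᵀ and Q_t ∈ ℝ^{(N_t+1)×(N_t+1)} satisfy Q_t + Q_tᵀ = e_n e_nᵀ − e_s e_sᵀ, where e_w,e_e ∈ ℝ^{N_x+1} and e_s,e_n ∈ ℝ^{N_t+1} are the first/last standard basis vectors. Define P = P_t ⊗ P_x, D_x = I_t ⊗ (P_x⁻¹Q_x), D_t = (P_t⁻¹Q_t) ⊗ I_x, R_w = I_t ⊗ e_wᵀ, R_e = I_t ⊗ e_eᵀ, R_s = e_sᵀ ⊗ I_x, R_n = e_nᵀ ⊗ I_x. Let κ_max > 0, let κ⁽¹⁾,…,κ⁽ᴷ⁾ satisfy 0 < κ⁽ᵏ⁾ ≤ κ_max, and let h, g ∈ ℝ^{N_t+1}, q⁽¹⁾,…,q⁽ᴷ⁾ ∈ ℝ^{N_x+1} be given data. Suppose u⁽¹⁾,…,u⁽ᴷ⁾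 ∈ ℝ^N satisfy, for each k, (D_t − κ⁽ᵏ⁾D_x²)u⁽ᵏ⁾ = −S_w⁽ᵏ⁾ − S_e⁽ᵏ⁾ − S_0⁽ᵏ⁾ − S_Γ⁽ᵏ'ᵏ⁻¹⁾ − S_Γ⁽ᵏ'ᵏ⁺¹⁾, where S_0⁽ᵏ⁾ = σ₀P⁻¹R_sᵀP_x(R_s u⁽ᵏ⁾ − q⁽ᵏ⁾) for all k; S_w⁽¹⁾ = σ_w P⁻¹R_wᵀP_t(R_w u⁽¹⁾ − h) and S_w⁽ᵏ⁾ = 0 for k ≥ 2; S_e⁽ᴷ⁾ = σ_e P⁻¹R_eᵀP_t(R_e u⁽ᴷ⁾ − g) and S_e⁽ᵏ⁾ = 0 for k ≤ K−1; for 2 ≤ k ≤ K, S_Γ⁽ᵏ'ᵏ⁻¹⁾ = σ₁P⁻¹R_wᵀP_t(R_w u⁽ᵏ⁾ − R_e u⁽ᵏ⁻¹⁾) + σ₂P⁻¹R_wᵀP_t(κ⁽ᵏ⁾R_w D_x u⁽ᵏ⁾ − κ⁽ᵏ⁻¹⁾R_e D_x u⁽ᵏ⁻¹⁾) + τ₁κ⁽ᵏ⁾P⁻¹D_xᵀR_wᵀP_t(R_w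 u⁽ᵏ⁾ − R_e u⁽ᵏ⁻¹⁾), and S_Γ⁽¹'⁰⁾ = 0; for 1 ≤ k ≤ K−1, S_Γ⁽ᵏ'ᵏ⁺¹⁾ = σ₃P⁻¹R_eᵀP_t(R_e u⁽ᵏ⁾ − R_w u⁽ᵏ⁺¹⁾) + σ₄P⁻¹R_eᵀP_t(κ⁽ᵏ⁾R_e D_x u⁽ᵏ⁾ − κ⁽ᵏ⁺¹⁾R_w D_x u⁽ᵏ⁺¹⁾) + τ₂κ⁽ᵏ⁾P⁻¹D_xᵀR_eᵀP_t(R_e u⁽ᵏ⁾ − R_w u⁽ᵏ⁺¹⁾), and S_Γ⁽ᴷ'ᴷ⁺¹⁾ = 0. Assume the SAT parameters satisfy σ₀ > ½, σ_w ≥ κ_max/(2p̂_0), σ_e ≥ κ_max/(2p̂_{N_x}), σ₁ = σ₃ ≥ 0, and there exists s > 0 with σ₂ = s, σ₄ = 1+s, τ₁ = −(1+s), τ₂ = −s. Then the discrete energy estimate holds: Σ_{k=1}^{K} ‖R_n u⁽ᵏ⁾‖²_{P_x} ≤ (σ₀²/(2σ₀−1)) Σ_{k=1}^{K} ‖q⁽ᵏ⁾‖²_{P_x}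 + σ_w ‖h‖²_{P_t} + σ_e ‖g‖²_{P_t}. -/

import Mathlib

/-!
Multiplying the scheme on element `k` by `u⁽ᵏ⁾ᵀ P` and using the summation-by-parts
property of `Q_t` and `Q_x` gives an energy identity: the energy `‖R_n u‖²_{P_x}` at the final
time equals the initial energy `‖R_s u‖²_{P_x}`, minus the dissipation `2κ ‖D_x u‖²_P`, plus the
fluxes `∓2κ ⟨R u, R D_x u⟩_{P_t}` through the west and east ends, minus the SAT contributions.
Completing the square bounds the initial SAT terms by `σ₀²/(2σ₀-1) ‖q‖²`. At the outer
boundaries the part `2κ p̂ ‖R D_x u‖²` of the dissipation absorbs the flux because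
`σ ≥ κ_max/(2p̂)`. At each interface the chosen parameters make all flux terms cancel, leaving
`-2σ₁ ‖R_e u⁽ᵏ⁾ - R_w u⁽ᵏ⁺¹⁾‖²_{P_t} ≤ 0`. Summing over the elements gives the estimate.
-/

open Matrix Kronecker Finset

namespace Matrix

variable {l m n p R : Type*}

theorem kronecker_sub [Ring R] (A : Matrix l m R) (B C : Matrix n p R) :
    A ⊗ₖ (B - C) = A ⊗ₖ B - A ⊗ₖ C := by
  ext ⟨_, _⟩ ⟨_, _⟩
  simp [mul_sub]

theorem sub_kronecker [Ring R] (A B : Matrix l m R) (C : Matrix n p R) :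
    (A - B) ⊗ₖ C = A ⊗ₖ C - B ⊗ₖ C := by
  ext ⟨_, _⟩ ⟨_, _⟩
  simp [sub_mul]

variable [Fintype m] [Fintype n] [CommRing R]

theorem IsSymm.dotProduct_mulVec_comm {A : Matrix n n R} (hA : A.IsSymm) (v w : n → R) :
    v ⬝ᵥ A *ᵥ w = w ⬝ᵥ A *ᵥ v := by
  rw [dotProduct_mulVec, ← mulVec_transpose, hA.eq, dotProduct_comm]

theorem two_mul_dotProduct_mulVec_self (A : Matrix n n R) (v : n → R) :
    2 * (v ⬝ᵥ A *ᵥ v) = v ⬝ᵥ (A + Aᵀ) *ᵥ v := by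
  rw [add_mulVec, dotProduct_add, mulVec_transpose, dotProduct_comm v (v ᵥ* A),
    ← dotProduct_mulVec, two_mul]

theorem dotProduct_transpose_mul_mul_mulVec (M : Matrix m n R) (A : Matrix m m R) (v w : n → R) :
    v ⬝ᵥ (Mᵀ * A * M) *ᵥ w = M *ᵥ v ⬝ᵥ A *ᵥ (M *ᵥ w) := by
  rw [← mulVec_mulVec, ← mulVec_mulVec, dotProduct_mulVec, vecMul_transpose]

variable [DecidableEq n] {P : Matrix n n R}

theorem dotProduct_mulVec_inv_mul_transpose_mul (hP : IsUnit P) (M : Matrix m n R)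
    (N : Matrix m m R) (v : n → R) (x : m → R) :
    v ⬝ᵥ P *ᵥ ((P⁻¹ * Mᵀ * N) *ᵥ x) = M *ᵥ v ⬝ᵥ N *ᵥ x := by
  rw [mulVec_mulVec, ← Matrix.mul_assoc, ← Matrix.mul_assoc,
    mul_nonsing_inv _ ((isUnit_iff_isUnit_det P).mp hP), Matrix.one_mul, ← mulVec_mulVec,
    dotProduct_mulVec, vecMul_transpose]

theorem dotProduct_mulVec_inv_mul_transpose_mul_transpose_mul (hP : IsUnit P)
    (D : Matrix n n R) (M : Matrix m n R) (N : Matrix m m R) (v : n → R) (x : m → R) :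
    v ⬝ᵥ P *ᵥ ((P⁻¹ * Dᵀ * Mᵀ * N) *ᵥ x) = M *ᵥ (D *ᵥ v) ⬝ᵥ N *ᵥ x := by
  rw [Matrix.mul_assoc P⁻¹, ← transpose_mul, dotProduct_mulVec_inv_mul_transpose_mul hP,
    mulVec_mulVec]

end Matrix

section Slices

variable {ι κ R : Type*} [DecidableEq ι] [DecidableEq κ]

/-- With `ι` the time and `κ` the space index, `sliceSnd 0` and `sliceSnd (Fin.last _)` are the
paper's `R_w` and `R_e`. -/
def sliceSnd [Zero R] [One R] (a : κ) : Matrix ι (ι × κ) R :=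
  of fun j p => if p.1 = j ∧ p.2 = a then 1 else 0

/-- `sliceFst 0` and `sliceFst (Fin.last _)` are the paper's `R_s` and `R_n`. -/
def sliceFst [Zero R] [One R] (b : ι) : Matrix κ (ι × κ) R :=
  of fun i p => if p.1 = b ∧ p.2 = i then 1 else 0

variable [CommRing R]

theorem transpose_sliceSnd_mul_mul [Fintype ι] (a : κ) (A : Matrix ι ι R) :
    (sliceSnd a : Matrix ι (ι × κ) R)ᵀ * A * (sliceSnd a : Matrix ι (ι × κ) R)
      = A ⊗ₖ single a a 1 := by
  ext ⟨j, i⟩ ⟨j', i'⟩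
  simp only [Matrix.mul_apply, transpose_apply, sliceSnd, of_apply, kronecker_apply, single]
  simp only [ite_and, eq_comm]
  split_ifs <;> simp_all

theorem transpose_sliceFst_mul_mul [Fintype κ] (b : ι) (B : Matrix κ κ R) :
    (sliceFst b : Matrix κ (ι × κ) R)ᵀ * B * (sliceFst b : Matrix κ (ι × κ) R)
      = single b b 1 ⊗ₖ B := by
  ext ⟨j, i⟩ ⟨j', i'⟩
  simp only [Matrix.mul_apply, transpose_apply, sliceFst, of_apply, kronecker_apply, single]
  simp only [ite_and, eq_comm]
  split_ifs <;> simp_all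

end Slices

section SummationByParts

variable {m n R : Type*} [Fintype m] [Fintype n] [DecidableEq m] [DecidableEq n] [CommRing R]

noncomputable def derivT (Pt Qt : Matrix m m R) : Matrix (m × n) (m × n) R := (Pt⁻¹ * Qt) ⊗ₖ 1

noncomputable def derivX (Px Qx : Matrix n n R) : Matrix (m × n) (m × n) R := 1 ⊗ₖ (Px⁻¹ * Qx)

variable {Pt Qt : Matrix m m R} {Px Qx : Matrix n n R}

theorem kronecker_mul_derivT (hPt : IsUnit Pt) : Pt ⊗ₖ Px * derivT Pt Qt = Qt ⊗ₖ Px := by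
  rw [derivT, ← mul_kronecker_mul, ← Matrix.mul_assoc,
    mul_nonsing_inv _ ((isUnit_iff_isUnit_det Pt).mp hPt), Matrix.one_mul, Matrix.mul_one]

theorem kronecker_mul_derivX (hPx : IsUnit Px) : Pt ⊗ₖ Px * derivX Px Qx = Pt ⊗ₖ Qx := by
  rw [derivX, ← mul_kronecker_mul, ← Matrix.mul_assoc,
    mul_nonsing_inv _ ((isUnit_iff_isUnit_det Px).mp hPx), Matrix.one_mul, Matrix.mul_one]

theorem two_mul_dotProduct_kronecker_mulVec_derivT (hPt : IsUnit Pt) (hPx : Px.IsSymm)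
    {t₀ t₁ : m} (hQt : Qt + Qtᵀ = single t₁ t₁ 1 - single t₀ t₀ 1) (v : m × n → R) :
    2 * (v ⬝ᵥ Pt ⊗ₖ Px *ᵥ (derivT Pt Qt *ᵥ v))
      = sliceFst t₁ *ᵥ v ⬝ᵥ Px *ᵥ (sliceFst t₁ *ᵥ v)
        - sliceFst t₀ *ᵥ v ⬝ᵥ Px *ᵥ (sliceFst t₀ *ᵥ v) := by
  rw [mulVec_mulVec, kronecker_mul_derivT hPt, two_mul_dotProduct_mulVec_self,
    ← kroneckerMap_transpose, hPx.eq, ← add_kronecker, hQt, sub_kronecker,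
    ← transpose_sliceFst_mul_mul, ← transpose_sliceFst_mul_mul, sub_mulVec, dotProduct_sub,
    dotProduct_transpose_mul_mul_mulVec, dotProduct_transpose_mul_mul_mulVec]

theorem dotProduct_kronecker_mulVec_derivX_mul_derivX (hPt : Pt.IsSymm) (hPx : IsUnit Px)
    {x₀ x₁ : n} (hQx : Qx + Qxᵀ = single x₁ x₁ 1 - single x₀ x₀ 1) (v : m × n → R) :
    v ⬝ᵥ Pt ⊗ₖ Px *ᵥ ((derivX Px Qx * derivX Px Qx) *ᵥ v)
      = sliceSnd x₁ *ᵥ v ⬝ᵥ Pt *ᵥ (sliceSnd x₁ *ᵥ (derivX Px Qx *ᵥ v))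
        - sliceSnd x₀ *ᵥ v ⬝ᵥ Pt *ᵥ (sliceSnd x₀ *ᵥ (derivX Px Qx *ᵥ v))
        - derivX Px Qx *ᵥ v ⬝ᵥ Pt ⊗ₖ Px *ᵥ (derivX Px Qx *ᵥ v) := by
  set w := derivX Px Qx *ᵥ v
  have hflip : v ⬝ᵥ Pt ⊗ₖ Qxᵀ *ᵥ w = w ⬝ᵥ Pt ⊗ₖ Px *ᵥ w := by
    rw [← hPt.eq, kroneckerMap_transpose, hPt.eq, dotProduct_mulVec, vecMul_transpose,
      ← kronecker_mul_derivX hPx, ← mulVec_mulVec, dotProduct_comm]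
  rw [← mulVec_mulVec, mulVec_mulVec w, kronecker_mul_derivX hPx, eq_sub_of_add_eq hQx,
    kronecker_sub, sub_mulVec, dotProduct_sub, hflip, kronecker_sub,
    ← transpose_sliceSnd_mul_mul, ← transpose_sliceSnd_mul_mul, sub_mulVec, dotProduct_sub,
    dotProduct_transpose_mul_mul_mulVec, dotProduct_transpose_mul_mul_mulVec]

theorem energy_eq_of_mulVec_eq_neg (hPt : IsUnit Pt) (hPtT : Pt.IsSymm) (hPx : IsUnit Px)
    (hPxT : Px.IsSymm) {t₀ t₁ : m} (hQt : Qt + Qtᵀ = single t₁ t₁ 1 - single t₀ t₀ 1)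
    {x₀ x₁ : n} (hQx : Qx + Qxᵀ = single x₁ x₁ 1 - single x₀ x₀ 1) (κ : R) (u S : m × n → R)
    (hu : (derivT Pt Qt - κ • (derivX Px Qx * derivX Px Qx)) *ᵥ u = -S) :
    sliceFst t₁ *ᵥ u ⬝ᵥ Px *ᵥ (sliceFst t₁ *ᵥ u)
      = sliceFst t₀ *ᵥ u ⬝ᵥ Px *ᵥ (sliceFst t₀ *ᵥ u)
        + 2 * κ * (sliceSnd x₁ *ᵥ u ⬝ᵥ Pt *ᵥ (sliceSnd x₁ *ᵥ (derivX Px Qx *ᵥ u))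
          - sliceSnd x₀ *ᵥ u ⬝ᵥ Pt *ᵥ (sliceSnd x₀ *ᵥ (derivX Px Qx *ᵥ u))
          - derivX Px Qx *ᵥ u ⬝ᵥ Pt ⊗ₖ Px *ᵥ (derivX Px Qx *ᵥ u))
        - 2 * (u ⬝ᵥ Pt ⊗ₖ Px *ᵥ S) := by
  have hdot := congrArg (fun z => u ⬝ᵥ Pt ⊗ₖ Px *ᵥ z) hu
  simp only [sub_mulVec, smul_mulVec, mulVec_sub, mulVec_smul, mulVec_neg, dotProduct_sub,
    dotProduct_smul, dotProduct_neg, smul_eq_mul,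
    dotProduct_kronecker_mulVec_derivX_mul_derivX hPtT hPx hQx] at hdot
  linear_combination 2 * hdot - two_mul_dotProduct_kronecker_mulVec_derivT hPt hPxT hQt u

end SummationByParts

theorem mul_dotProduct_sliceSnd_le_dotProduct_kronecker {m n : Type*} [Fintype m] [Fintype n]
    [DecidableEq m] [DecidableEq n] {Pt : Matrix m m ℝ} (hPt : Pt.PosSemidef) {d : n → ℝ}
    (hd : 0 ≤ d) (a : n) (w : m × n → ℝ) :
    d a * (sliceSnd a *ᵥ w ⬝ᵥ Pt *ᵥ (sliceSnd a *ᵥ w)) ≤ w ⬝ᵥ Pt ⊗ₖ diagonal d *ᵥ w := by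
  have hrest : (diagonal d - single a a (d a)).PosSemidef := by
    rw [← diagonal_single, diagonal_sub, posSemidef_diagonal_iff]
    intro i
    rcases eq_or_ne i a with rfl | hi
    · simp
    · simpa [hi] using hd i
  have hsingle : single a a (d a) = d a • single a a (1 : ℝ) := by
    rw [smul_single, smul_eq_mul, mul_one]
  have := (hPt.kronecker hrest).dotProduct_mulVec_nonneg w
  rw [hsingle, kronecker_sub, kronecker_smul, sub_mulVec, smul_mulVec, dotProduct_sub,
    dotProduct_smul, smul_eq_mul, star_trivial] at this
  rw [← dotProduct_transpose_mul_mul_mulVec, transpose_sliceSnd_mul_mul]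
  linarith

section Penalties

variable {ι m : Type*} [Fintype ι] [Fintype m] [DecidableEq ι] {P : Matrix ι ι ℝ}
  {N : Matrix m m ℝ}

theorem Matrix.PosSemidef.quadratic_nonneg (hN : N.PosSemidef) (α β : ℝ) (x y : m → ℝ) :
    0 ≤ α ^ 2 * (x ⬝ᵥ N *ᵥ x) + 2 * α * β * (x ⬝ᵥ N *ᵥ y) + β ^ 2 * (y ⬝ᵥ N *ᵥ y) := by
  have hsymm : N.IsSymm := isHermitian_iff_isSymm.mp hN.isHermitian
  have := hN.dotProduct_mulVec_nonneg (α • x + β • y)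
  simp only [star_trivial, mulVec_add, mulVec_smul, dotProduct_add, add_dotProduct,
    dotProduct_smul, smul_dotProduct, smul_eq_mul, hsymm.dotProduct_mulVec_comm y x] at this
  linarith

theorem initial_penalty_le (hP : IsUnit P) (hN : N.PosSemidef) {σ : ℝ} (hσ : 1 / 2 < σ)
    (R : Matrix m ι ℝ) (v : ι → ℝ) (q : m → ℝ) :
    R *ᵥ v ⬝ᵥ N *ᵥ (R *ᵥ v) - 2 * (v ⬝ᵥ P *ᵥ (σ • (P⁻¹ * Rᵀ * N) *ᵥ (R *ᵥ v - q)))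
      ≤ σ ^ 2 / (2 * σ - 1) * (q ⬝ᵥ N *ᵥ q) := by
  have hc : 0 < 2 * σ - 1 := by linarith
  -- `(2σ - 1) (RHS - LHS) = ‖(2σ - 1) Rv - σ q‖²`
  rw [mulVec_smul, dotProduct_smul, smul_eq_mul, dotProduct_mulVec_inv_mul_transpose_mul hP,
    div_mul_eq_mul_div, le_div_iff₀ hc, mulVec_sub, dotProduct_sub]
  linear_combination hN.quadratic_nonneg (2 * σ - 1) (-σ) (R *ᵥ v) q

theorem boundary_penalty_le (hP : IsUnit P) (hN : N.PosSemidef) {κ κmax p σ W : ℝ}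
    (hp : 0 < p) (hκ : 0 ≤ κ) (hκmax : κ ≤ κmax) (hσ : κmax / (2 * p) ≤ σ) (R : Matrix m ι ℝ)
    (v : ι → ℝ) (d h : m → ℝ) (hW : p * (d ⬝ᵥ N *ᵥ d) ≤ W) :
    -(2 * κ) * (R *ᵥ v ⬝ᵥ N *ᵥ d) - 2 * (v ⬝ᵥ P *ᵥ (σ • (P⁻¹ * Rᵀ * N) *ᵥ (R *ᵥ v - h)))
      - 2 * κ * W ≤ σ * (h ⬝ᵥ N *ᵥ h) := by
  have hκσ : κ ≤ 2 * σ * p := by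
    have := (div_le_iff₀ (by positivity)).mp hσ
    linarith
  have hσ0 : 0 ≤ σ := by nlinarith
  rw [mulVec_smul, dotProduct_smul, smul_eq_mul, dotProduct_mulVec_inv_mul_transpose_mul hP,
    mulVec_sub, dotProduct_sub]
  -- `2p (RHS - LHS) = κ ‖Rv + 2p d‖² + 2pσ ‖Rv - h‖² + (2σp - κ) ‖Rv‖² + 4pκ (W - p ‖d‖²)`
  nlinarith [mul_nonneg hκ (hN.quadratic_nonneg 1 (2 * p) (R *ᵥ v) d),
    mul_nonneg (mul_nonneg hp.le hσ0) (hN.quadratic_nonneg 1 (-1) (R *ᵥ v) h),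
    mul_nonneg (sub_nonneg.mpr hκσ) (hN.quadratic_nonneg 1 0 (R *ᵥ v) (R *ᵥ v)),
    mul_nonneg (mul_nonneg hp.le hκ) (sub_nonneg.mpr hW)]

theorem Matrix.IsSymm.interface_energy_eq (hN : N.IsSymm) (σ s κa κb : ℝ) (a b da db : m → ℝ) :
    2 * κa * (a ⬝ᵥ N *ᵥ da)
        - 2 * (σ * (a ⬝ᵥ N *ᵥ (a - b)) + (1 + s) * (a ⬝ᵥ N *ᵥ (κa • da - κb • db))
          + -s * κa * (da ⬝ᵥ N *ᵥ (a - b)))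
      + (-(2 * κb) * (b ⬝ᵥ N *ᵥ db)
        - 2 * (σ * (b ⬝ᵥ N *ᵥ (b - a)) + s * (b ⬝ᵥ N *ᵥ (κb • db - κa • da))
          + -(1 + s) * κb * (db ⬝ᵥ N *ᵥ (b - a))))
      = -2 * σ * ((a - b) ⬝ᵥ N *ᵥ (a - b)) := by
  simp only [mulVec_sub, mulVec_smul, dotProduct_sub, sub_dotProduct, dotProduct_smul,
    smul_eq_mul, hN.dotProduct_mulVec_comm da, hN.dotProduct_mulVec_comm db,
    hN.dotProduct_mulVec_comm b a]
  ring

theorem interface_penalty_nonpos (hP : IsUnit P) (hN : N.PosSemidef) (Rw Re : Matrix m ι ℝ)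
    (D : Matrix ι ι ℝ) {σ s κa κb : ℝ} (hσ : 0 ≤ σ) (ua ub : ι → ℝ) :
    2 * κa * (Re *ᵥ ua ⬝ᵥ N *ᵥ (Re *ᵥ (D *ᵥ ua)))
        - 2 * (ua ⬝ᵥ P *ᵥ (σ • (P⁻¹ * Reᵀ * N) *ᵥ (Re *ᵥ ua - Rw *ᵥ ub)
          + (1 + s) • (P⁻¹ * Reᵀ * N) *ᵥ (κa • Re *ᵥ (D *ᵥ ua) - κb • Rw *ᵥ (D *ᵥ ub))
          + (-s * κa) • (P⁻¹ * Dᵀ * Reᵀ * N) *ᵥ (Re *ᵥ ua - Rw *ᵥ ub)))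
      + (-(2 * κb) * (Rw *ᵥ ub ⬝ᵥ N *ᵥ (Rw *ᵥ (D *ᵥ ub)))
        - 2 * (ub ⬝ᵥ P *ᵥ (σ • (P⁻¹ * Rwᵀ * N) *ᵥ (Rw *ᵥ ub - Re *ᵥ ua)
          + s • (P⁻¹ * Rwᵀ * N) *ᵥ (κb • Rw *ᵥ (D *ᵥ ub) - κa • Re *ᵥ (D *ᵥ ua))
          + (-(1 + s) * κb) • (P⁻¹ * Dᵀ * Rwᵀ * N) *ᵥ (Rw *ᵥ ub - Re *ᵥ ua))))
      ≤ 0 := by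
  simp only [mulVec_add, dotProduct_add, mulVec_smul, dotProduct_smul, smul_eq_mul,
    dotProduct_mulVec_inv_mul_transpose_mul hP,
    dotProduct_mulVec_inv_mul_transpose_mul_transpose_mul hP]
  rw [(isHermitian_iff_isSymm.mp hN.isHermitian).interface_energy_eq]
  have hjump := hN.dotProduct_mulVec_nonneg (Re *ᵥ ua - Rw *ᵥ ub)
  rw [star_trivial] at hjump
  linarith [mul_nonneg hσ hjump]

end Penalties

theorem sum_Icc_le_of_interface_nonpos {K : ℕ} (hK : 2 ≤ K) {E I FL FR W : ℕ → ℝ}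
    (hE : ∀ k ∈ Icc 1 K, E k = I k + FL k + FR k - W k) (hW : ∀ k ∈ Ioo 1 K, 0 ≤ W k)
    (hΓ : ∀ k ∈ Ico 1 K, FR k + FL (k + 1) ≤ 0) :
    ∑ k ∈ Icc 1 K, E k ≤ ∑ k ∈ Icc 1 K, I k + (FL 1 - W 1) + (FR K - W K) := by
  induction K, hK using Nat.le_induction with
  | base =>
    have h1 := hE 1 (by simp)
    have h2 := hE 2 (by simp)
    have h12 := hΓ 1 (by simp)
    rw [show Icc 1 2 = {1, 2} from rfl, sum_pair (by norm_num), sum_pair (by norm_num)]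
    linarith
  | succ K hK ih =>
    rw [sum_Icc_succ_top (by omega), sum_Icc_succ_top (by omega)]
    have hK1 := hE (K + 1) (by simp)
    have hKK := hΓ K (by simp; omega)
    have hWK := hW K (by simp; omega)
    have := ih (fun k hk => hE k (by simp at hk ⊢; omega))
      (fun k hk => hW k (by simp at hk ⊢; omega)) (fun k hk => hΓ k (by simp at hk ⊢; omega))
    linarith

theorem stmt_15_general
    (Nx Nt K : ℕ) (hK : 2 ≤ K)
    (phat : Fin (Nx + 1) → ℝ) (qhat : Fin (Nt + 1) → ℝ)
    (hphat : ∀ i, 0 < phat i) (hqhat : ∀ j, 0 < qhat j)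
    (Px : Matrix (Fin (Nx + 1)) (Fin (Nx + 1)) ℝ) (hPx : Px = Matrix.diagonal phat)
    (Pt : Matrix (Fin (Nt + 1)) (Fin (Nt + 1)) ℝ) (hPt : Pt = Matrix.diagonal qhat)
    (Qx : Matrix (Fin (Nx + 1)) (Fin (Nx + 1)) ℝ)
    (hQx : Qx + Qxᵀ =
      Matrix.single (Fin.last Nx) (Fin.last Nx) (1 : ℝ)
        - Matrix.single 0 0 (1 : ℝ))
    (Qt : Matrix (Fin (Nt + 1)) (Fin (Nt + 1)) ℝ)
    (hQt : Qt + Qtᵀ =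
      Matrix.single (Fin.last Nt) (Fin.last Nt) (1 : ℝ)
        - Matrix.single 0 0 (1 : ℝ))
    (P : Matrix (Fin (Nt + 1) × Fin (Nx + 1)) (Fin (Nt + 1) × Fin (Nx + 1)) ℝ)
    (hP : P = Pt ⊗ₖ Px)
    (Dx Dt : Matrix (Fin (Nt + 1) × Fin (Nx + 1)) (Fin (Nt + 1) × Fin (Nx + 1)) ℝ)
    (hDx : Dx = (1 : Matrix (Fin (Nt + 1)) (Fin (Nt + 1)) ℝ) ⊗ₖ (Px⁻¹ * Qx))
    (hDt : Dt = (Pt⁻¹ * Qt) ⊗ₖ (1 : Matrix (Fin (Nx + 1)) (Fin (Nx + 1)) ℝ))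
    (Rw Re : Matrix (Fin (Nt + 1)) (Fin (Nt + 1) × Fin (Nx + 1)) ℝ)
    (hRw : Rw = Matrix.of fun j pp => if pp.1 = j ∧ pp.2 = 0 then (1 : ℝ) else 0)
    (hRe : Re = Matrix.of fun j pp => if pp.1 = j ∧ pp.2 = Fin.last Nx then (1 : ℝ) else 0)
    (Rs Rn : Matrix (Fin (Nx + 1)) (Fin (Nt + 1) × Fin (Nx + 1)) ℝ)
    (hRs : Rs = Matrix.of fun i pp => if pp.1 = 0 ∧ pp.2 = i then (1 : ℝ) else 0)
    (hRn : Rn = Matrix.of fun i pp => if pp.1 = Fin.last Nt ∧ pp.2 = i then (1 : ℝ) else 0)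
    (κmax : ℝ)
    (κ : ℕ → ℝ) (hκ : ∀ k, 1 ≤ k → k ≤ K → 0 < κ k ∧ κ k ≤ κmax)
    (h g : Fin (Nt + 1) → ℝ) (q : ℕ → Fin (Nx + 1) → ℝ)
    (σ₀ σw σe σ₁ σ₂ σ₃ σ₄ τ₁ τ₂ s : ℝ)
    (hσ₀ : 1 / 2 < σ₀)
    (hσw : κmax / (2 * phat 0) ≤ σw)
    (hσe : κmax / (2 * phat (Fin.last Nx)) ≤ σe)
    (hσ₁₃ : σ₁ = σ₃) (hσ₁nn : 0 ≤ σ₁)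
    (hσ₂ : σ₂ = s) (hσ₄ : σ₄ = 1 + s)
    (hτ₁ : τ₁ = -(1 + s)) (hτ₂ : τ₂ = -s)
    (u : ℕ → Fin (Nt + 1) × Fin (Nx + 1) → ℝ)
    (Sw Se S0 SΓm SΓp : ℕ → Fin (Nt + 1) × Fin (Nx + 1) → ℝ)
    -- initial-condition SAT on every element
    (hS0 : ∀ k, 1 ≤ k → k ≤ K →
      S0 k = σ₀ • (P⁻¹ * Rsᵀ * Px).mulVec (Rs.mulVec (u k) - q k))
    -- west boundary SAT on the first element only
    (hSw1 : Sw 1 = σw • (P⁻¹ * Rwᵀ * Pt).mulVec (Rw.mulVec (u 1) - h))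
    (hSw0 : ∀ k, 2 ≤ k → k ≤ K → Sw k = 0)
    -- east boundary SAT on the last element only
    (hSeK : Se K = σe • (P⁻¹ * Reᵀ * Pt).mulVec (Re.mulVec (u K) - g))
    (hSe0 : ∀ k, 1 ≤ k → k ≤ K - 1 → Se k = 0)
    -- left-interface SATs
    (hSΓm : ∀ k, 2 ≤ k → k ≤ K →
      SΓm k =
        σ₁ • (P⁻¹ * Rwᵀ * Pt).mulVec (Rw.mulVec (u k) - Re.mulVec (u (k - 1)))
        + σ₂ • (P⁻¹ * Rwᵀ * Pt).mulVec
            (κ k • Rw.mulVec (Dx.mulVec (u k))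
              - κ (k - 1) • Re.mulVec (Dx.mulVec (u (k - 1))))
        + (τ₁ * κ k) • (P⁻¹ * Dxᵀ * Rwᵀ * Pt).mulVec
            (Rw.mulVec (u k) - Re.mulVec (u (k - 1))))
    (hSΓm1 : SΓm 1 = 0)
    -- right-interface SATs
    (hSΓp : ∀ k, 1 ≤ k → k ≤ K - 1 →
      SΓp k =
        σ₃ • (P⁻¹ * Reᵀ * Pt).mulVec (Re.mulVec (u k) - Rw.mulVec (u (k + 1)))
        + σ₄ • (P⁻¹ * Reᵀ * Pt).mulVec
            (κ k • Re.mulVec (Dx.mulVec (u k))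
              - κ (k + 1) • Rw.mulVec (Dx.mulVec (u (k + 1))))
        + (τ₂ * κ k) • (P⁻¹ * Dxᵀ * Reᵀ * Pt).mulVec
            (Re.mulVec (u k) - Rw.mulVec (u (k + 1))))
    (hSΓpK : SΓp K = 0)
    -- the SBP–SAT scheme with zero source term on each element
    (hscheme : ∀ k, 1 ≤ k → k ≤ K →
      (Dt - κ k • (Dx * Dx)).mulVec (u k)
        = -(Sw k) - Se k - S0 k - SΓm k - SΓp k) :
    ∑ k ∈ Finset.Icc 1 K, Rn.mulVec (u k) ⬝ᵥ Px.mulVec (Rn.mulVec (u k))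
      ≤ (σ₀ ^ 2 / (2 * σ₀ - 1)) *
          ∑ k ∈ Finset.Icc 1 K, q k ⬝ᵥ Px.mulVec (q k)
        + σw * (h ⬝ᵥ Pt.mulVec h) + σe * (g ⬝ᵥ Pt.mulVec g) := by
  subst σ₂ σ₄ τ₁ τ₂ σ₃
  replace hRw : Rw = sliceSnd 0 := hRw
  replace hRe : Re = sliceSnd (Fin.last Nx) := hRe
  replace hRs : Rs = sliceFst 0 := hRs
  replace hRn : Rn = sliceFst (Fin.last Nt) := hRn
  replace hDx : Dx = derivX Px Qx := hDx
  replace hDt : Dt = derivT Pt Qt := hDt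
  have hPtD : Pt.PosDef := hPt ▸ posDef_diagonal_iff.mpr hqhat
  have hPxD : Px.PosDef := hPx ▸ posDef_diagonal_iff.mpr hphat
  have hPU : IsUnit P := hP ▸ hPtD.isUnit.kronecker hPxD.isUnit
  set I : ℕ → ℝ := fun k => Rs *ᵥ u k ⬝ᵥ Px *ᵥ (Rs *ᵥ u k) - 2 * (u k ⬝ᵥ P *ᵥ S0 k)
  set FL : ℕ → ℝ := fun k => -(2 * κ k) * (Rw *ᵥ u k ⬝ᵥ Pt *ᵥ (Rw *ᵥ (Dx *ᵥ u k)))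
    - 2 * (u k ⬝ᵥ P *ᵥ (Sw k + SΓm k))
  set FR : ℕ → ℝ := fun k => 2 * κ k * (Re *ᵥ u k ⬝ᵥ Pt *ᵥ (Re *ᵥ (Dx *ᵥ u k)))
    - 2 * (u k ⬝ᵥ P *ᵥ (Se k + SΓp k))
  set W : ℕ → ℝ := fun k => 2 * κ k * (Dx *ᵥ u k ⬝ᵥ P *ᵥ (Dx *ᵥ u k))
  have hE : ∀ k ∈ Icc 1 K, Rn *ᵥ u k ⬝ᵥ Px *ᵥ (Rn *ᵥ u k) = I k + FL k + FR k - W k := by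
    intro k hk
    rw [mem_Icc] at hk
    have := energy_eq_of_mulVec_eq_neg hPtD.isUnit (hPt ▸ isSymm_diagonal _) hPxD.isUnit
      (hPx ▸ isSymm_diagonal _) hQt hQx (κ k) (u k) (Sw k + Se k + S0 k + SΓm k + SΓp k)
      (by rw [← hDt, ← hDx, hscheme k hk.1 hk.2]; abel)
    rw [← hRw, ← hRe, ← hRs, ← hRn, ← hDx, ← hP] at this
    simp only [I, FL, FR, W, mulVec_add, dotProduct_add] at this ⊢
    linear_combination this
  have hW : ∀ k ∈ Ioo 1 K, 0 ≤ W k := by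
    intro k hk
    rw [mem_Ioo] at hk
    have := (hP ▸ hPtD.posSemidef.kronecker hPxD.posSemidef : P.PosSemidef).dotProduct_mulVec_nonneg
      (Dx *ᵥ u k)
    rw [star_trivial] at this
    exact mul_nonneg (mul_nonneg two_pos.le (hκ k hk.1.le hk.2.le).1.le) this
  have hΓ : ∀ k ∈ Ico 1 K, FR k + FL (k + 1) ≤ 0 := by
    intro k hk
    rw [mem_Ico] at hk
    simp only [FR, FL, hSe0 k hk.1 (by omega), hSw0 (k + 1) (by omega) (by omega),
      hSΓp k hk.1 (by omega), hSΓm (k + 1) (by omega) (by omega), Nat.add_sub_cancel, zero_add]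
    exact interface_penalty_nonpos hPU hPtD.posSemidef Rw Re Dx hσ₁nn (u k) (u (k + 1))
  have hI : ∀ k ∈ Icc 1 K, I k ≤ σ₀ ^ 2 / (2 * σ₀ - 1) * (q k ⬝ᵥ Px *ᵥ q k) := by
    intro k hk
    rw [mem_Icc] at hk
    simp only [I, hS0 k hk.1 hk.2]
    exact initial_penalty_le hPU hPxD.posSemidef hσ₀ Rs (u k) (q k)
  have hdiss : ∀ k (a : Fin (Nx + 1)),
      phat a * (sliceSnd a *ᵥ (Dx *ᵥ u k) ⬝ᵥ Pt *ᵥ (sliceSnd a *ᵥ (Dx *ᵥ u k)))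
        ≤ Dx *ᵥ u k ⬝ᵥ P *ᵥ (Dx *ᵥ u k) := fun k a => by
    rw [hP, hPx]
    exact mul_dotProduct_sliceSnd_le_dotProduct_kronecker hPtD.posSemidef
      (fun i => (hphat i).le) a _
  have hwest : FL 1 - W 1 ≤ σw * (h ⬝ᵥ Pt *ᵥ h) := by
    obtain ⟨hκ1, hκ1max⟩ := hκ 1 le_rfl (by omega)
    simp only [FL, W, hSw1, hSΓm1, add_zero]
    exact boundary_penalty_le hPU hPtD.posSemidef (hphat 0) hκ1.le hκ1max hσw Rw (u 1) _ h
      (hRw ▸ hdiss 1 0)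
  have heast : FR K - W K ≤ σe * (g ⬝ᵥ Pt *ᵥ g) := by
    obtain ⟨hκK, hκKmax⟩ := hκ K (by omega) le_rfl
    have := boundary_penalty_le hPU hPtD.posSemidef (hphat (Fin.last Nx)) hκK.le hκKmax hσe
      Re (u K) (-(Re *ᵥ (Dx *ᵥ u K))) g
      (by simpa only [hRe, mulVec_neg, dotProduct_neg, neg_dotProduct, neg_neg] using
        hdiss K (Fin.last Nx))
    simp only [FR, W, hSeK, hSΓpK, add_zero, mulVec_neg, dotProduct_neg] at this ⊢
    linarith
  refine (sum_Icc_le_of_interface_nonpos hK hE hW hΓ).trans ?_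
  rw [mul_sum]
  linarith [sum_le_sum hI]

/-- Theorem 2.1 (stability of the space–time SBP–SAT spectral element scheme for the
heat equation with zero source term). Subdomains are indexed `k = 1, …, K`.
Under the SAT-parameter conditions `σ₀ > 1/2`, `σ_w ≥ κ_max/(2p̂_0)`,
`σ_e ≥ κ_max/(2p̂_{N_x})`, `σ₁ = σ₃ ≥ 0`, `σ₂ = s`, `σ₄ = 1+s`, `τ₁ = −(1+s)`,
`τ₂ = −s` (for some `s > 0`), the discrete energy estimate
`Σ_k ‖R_n u⁽ᵏ⁾‖²_{P_x} ≤ (σ₀²/(2σ₀−1)) Σ_k ‖q⁽ᵏ⁾‖²_{P_x} + σ_w ‖h‖²_{P_t}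
+ σ_e ‖g‖²_{P_t}` holds. -/
theorem stmt_15
    (Nx Nt K : ℕ) (hNx : 1 ≤ Nx) (hNt : 1 ≤ Nt) (hK : 2 ≤ K)
    (phat : Fin (Nx + 1) → ℝ) (qhat : Fin (Nt + 1) → ℝ)
    (hphat : ∀ i, 0 < phat i) (hqhat : ∀ j, 0 < qhat j)
    (Px : Matrix (Fin (Nx + 1)) (Fin (Nx + 1)) ℝ) (hPx : Px = Matrix.diagonal phat)
    (Pt : Matrix (Fin (Nt + 1)) (Fin (Nt + 1)) ℝ) (hPt : Pt = Matrix.diagonal qhat)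
    (Qx : Matrix (Fin (Nx + 1)) (Fin (Nx + 1)) ℝ)
    (hQx : Qx + Qxᵀ =
      Matrix.single (Fin.last Nx) (Fin.last Nx) (1 : ℝ)
        - Matrix.single 0 0 (1 : ℝ))
    (Qt : Matrix (Fin (Nt + 1)) (Fin (Nt + 1)) ℝ)
    (hQt : Qt + Qtᵀ =
      Matrix.single (Fin.last Nt) (Fin.last Nt) (1 : ℝ)
        - Matrix.single 0 0 (1 : ℝ))
    (P : Matrix (Fin (Nt + 1) × Fin (Nx + 1)) (Fin (Nt + 1) × Fin (Nx + 1)) ℝ)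
    (hP : P = Pt ⊗ₖ Px)
    (Dx Dt : Matrix (Fin (Nt + 1) × Fin (Nx + 1)) (Fin (Nt + 1) × Fin (Nx + 1)) ℝ)
    (hDx : Dx = (1 : Matrix (Fin (Nt + 1)) (Fin (Nt + 1)) ℝ) ⊗ₖ (Px⁻¹ * Qx))
    (hDt : Dt = (Pt⁻¹ * Qt) ⊗ₖ (1 : Matrix (Fin (Nx + 1)) (Fin (Nx + 1)) ℝ))
    (Rw Re : Matrix (Fin (Nt + 1)) (Fin (Nt + 1) × Fin (Nx + 1)) ℝ)
    (hRw : Rw = Matrix.of fun j pp => if pp.1 = j ∧ pp.2 = 0 then (1 : ℝ) else 0)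
    (hRe : Re = Matrix.of fun j pp => if pp.1 = j ∧ pp.2 = Fin.last Nx then (1 : ℝ) else 0)
    (Rs Rn : Matrix (Fin (Nx + 1)) (Fin (Nt + 1) × Fin (Nx + 1)) ℝ)
    (hRs : Rs = Matrix.of fun i pp => if pp.1 = 0 ∧ pp.2 = i then (1 : ℝ) else 0)
    (hRn : Rn = Matrix.of fun i pp => if pp.1 = Fin.last Nt ∧ pp.2 = i then (1 : ℝ) else 0)
    (κmax : ℝ) (hκmax : 0 < κmax)
    (κ : ℕ → ℝ) (hκ : ∀ k, 1 ≤ k → k ≤ K → 0 < κ k ∧ κ k ≤ κmax)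
    (h g : Fin (Nt + 1) → ℝ) (q : ℕ → Fin (Nx + 1) → ℝ)
    (σ₀ σw σe σ₁ σ₂ σ₃ σ₄ τ₁ τ₂ s : ℝ)
    (hσ₀ : 1 / 2 < σ₀)
    (hσw : κmax / (2 * phat 0) ≤ σw)
    (hσe : κmax / (2 * phat (Fin.last Nx)) ≤ σe)
    (hσ₁₃ : σ₁ = σ₃) (hσ₁nn : 0 ≤ σ₁)
    (hs : 0 < s) (hσ₂ : σ₂ = s) (hσ₄ : σ₄ = 1 + s)
    (hτ₁ : τ₁ = -(1 + s)) (hτ₂ : τ₂ = -s)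
    (u : ℕ → Fin (Nt + 1) × Fin (Nx + 1) → ℝ)
    (Sw Se S0 SΓm SΓp : ℕ → Fin (Nt + 1) × Fin (Nx + 1) → ℝ)
    -- initial-condition SAT on every element
    (hS0 : ∀ k, 1 ≤ k → k ≤ K →
      S0 k = σ₀ • (P⁻¹ * Rsᵀ * Px).mulVec (Rs.mulVec (u k) - q k))
    -- west boundary SAT on the first element only
    (hSw1 : Sw 1 = σw • (P⁻¹ * Rwᵀ * Pt).mulVec (Rw.mulVec (u 1) - h))
    (hSw0 : ∀ k, 2 ≤ k → k ≤ K → Sw k = 0)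
    -- east boundary SAT on the last element only
    (hSeK : Se K = σe • (P⁻¹ * Reᵀ * Pt).mulVec (Re.mulVec (u K) - g))
    (hSe0 : ∀ k, 1 ≤ k → k ≤ K - 1 → Se k = 0)
    -- left-interface SATs
    (hSΓm : ∀ k, 2 ≤ k → k ≤ K →
      SΓm k =
        σ₁ • (P⁻¹ * Rwᵀ * Pt).mulVec (Rw.mulVec (u k) - Re.mulVec (u (k - 1)))
        + σ₂ • (P⁻¹ * Rwᵀ * Pt).mulVec
            (κ k • Rw.mulVec (Dx.mulVec (u k))
              - κ (k - 1) • Re.mulVec (Dx.mulVec (u (k - 1))))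
        + (τ₁ * κ k) • (P⁻¹ * Dxᵀ * Rwᵀ * Pt).mulVec
            (Rw.mulVec (u k) - Re.mulVec (u (k - 1))))
    (hSΓm1 : SΓm 1 = 0)
    -- right-interface SATs
    (hSΓp : ∀ k, 1 ≤ k → k ≤ K - 1 →
      SΓp k =
        σ₃ • (P⁻¹ * Reᵀ * Pt).mulVec (Re.mulVec (u k) - Rw.mulVec (u (k + 1)))
        + σ₄ • (P⁻¹ * Reᵀ * Pt).mulVec
            (κ k • Re.mulVec (Dx.mulVec (u k))
              - κ (k + 1) • Rw.mulVec (Dx.mulVec (u (k + 1))))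
        + (τ₂ * κ k) • (P⁻¹ * Dxᵀ * Reᵀ * Pt).mulVec
            (Re.mulVec (u k) - Rw.mulVec (u (k + 1))))
    (hSΓpK : SΓp K = 0)
    -- the SBP–SAT scheme with zero source term on each element
    (hscheme : ∀ k, 1 ≤ k → k ≤ K →
      (Dt - κ k • (Dx * Dx)).mulVec (u k)
        = -(Sw k) - Se k - S0 k - SΓm k - SΓp k) :
    ∑ k ∈ Finset.Icc 1 K, Rn.mulVec (u k) ⬝ᵥ Px.mulVec (Rn.mulVec (u k))
      ≤ (σ₀ ^ 2 / (2 * σ₀ - 1)) *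
          ∑ k ∈ Finset.Icc 1 K, q k ⬝ᵥ Px.mulVec (q k)
        + σw * (h ⬝ᵥ Pt.mulVec h) + σe * (g ⬝ᵥ Pt.mulVec g) :=
  stmt_15_general Nx Nt K hK phat qhat hphat hqhat Px hPx Pt hPt Qx hQx Qt hQt P hP Dx Dt hDx hDt Rw
    Re hRw hRe Rs Rn hRs hRn κmax κ hκ h g q σ₀ σw σe σ₁ σ₂ σ₃ σ₄ τ₁ τ₂ s hσ₀ hσw hσe hσ₁₃ hσ₁nn hσ₂
    hσ₄ hτ₁ hτ₂ u Sw Se S0 SΓm SΓp hS0 hSw1 hSw0 hSeK hSe0 hSΓm hSΓm1 hSΓp hSΓpK hscheme
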